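/- arXiv:2507.21797 — 3 statements merged into one kernel-verified Lean document; each statement's English description precedes it below -/
import Mathlib

section
/- Fix τ̂ > 0 and γ > 0, and let c_bp := -(12γ/(√2 τ̂²))^{1/3} and α_bp := ((√2/3)c_bp - γ) · √(4 + c_bp²τ̂²)/(c_bp τ̂). Then c_bp < 0 and the function F(c) = (√2/3)c - α_bp·cτ̂/√(c²τ̂²+4) - γ satisfies F(c_bp) = 0 and F'(c_bp) = 0, i.e. (c_bp, α_bp) is a degenerate (fold point) solution of the travelling-front existence condition. -/
open Real

/-!
The fold condition is a computation with the derivative `v*'(c) = 4τ̂ / (c²τ̂² + 4)^{3/2}`.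
Once `α` is chosen so that `c ≠ 0` solves `F(c) = a c - α v*(c) - γ = 0`, i.e. `α = (a c - γ) / v*(c)`,
one finds `F'(c) = (a c³ τ̂² + 4γ) / (c (c²τ̂² + 4))`. For `a = √2/3` the numerator vanishes exactly
when `c³ = -12γ / (√2 τ̂²)`, which is how `c_bp` is defined.
-/

noncomputable def vStar (τ c : ℝ) : ℝ := c * τ / √(c ^ 2 * τ ^ 2 + 4)

noncomputable def frontMismatch (a α γ τ c : ℝ) : ℝ := a * c - α * vStar τ c - γ

noncomputable def alphaOfSpeed (a γ τ c : ℝ) : ℝ := (a * c - γ) * √(c ^ 2 * τ ^ 2 + 4) / (c * τ)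

theorem hasDerivAt_vStar (τ c : ℝ) :
    HasDerivAt (vStar τ) (4 * τ / √(c ^ 2 * τ ^ 2 + 4) ^ 3) c := by
  have hq : 0 < c ^ 2 * τ ^ 2 + 4 := by positivity
  have hq' : HasDerivAt (fun x => x ^ 2 * τ ^ 2 + 4) (2 * c * τ ^ 2) c := by
    simpa using ((hasDerivAt_pow 2 c).mul_const (τ ^ 2)).add_const 4
  have hr : 0 < √(c ^ 2 * τ ^ 2 + 4) := sqrt_pos.mpr hq
  refine (((hasDerivAt_id c).mul_const τ).div (hq'.sqrt hq.ne') hr.ne').congr_deriv ?_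
  have hr2 := sq_sqrt hq.le
  set r := √(c ^ 2 * τ ^ 2 + 4)
  rw [id, pow_succ _ 2, hr2]
  field_simp
  linear_combination τ * hr2

theorem hasDerivAt_frontMismatch (a α γ τ c : ℝ) :
    HasDerivAt (frontMismatch a α γ τ) (a - α * (4 * τ / √(c ^ 2 * τ ^ 2 + 4) ^ 3)) c := by
  exact ((((hasDerivAt_id c).const_mul a).sub ((hasDerivAt_vStar τ c).const_mul α)).sub_const
    γ).congr_deriv (by ring)

theorem frontMismatch_alphaOfSpeed_self {a γ τ c : ℝ} (hc : c ≠ 0) (hτ : τ ≠ 0) :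
    frontMismatch a (alphaOfSpeed a γ τ c) γ τ c = 0 := by
  have hr : 0 < √(c ^ 2 * τ ^ 2 + 4) := sqrt_pos.mpr (by positivity)
  unfold frontMismatch alphaOfSpeed vStar
  field_simp
  ring

theorem hasDerivAt_frontMismatch_alphaOfSpeed_self {a γ τ c : ℝ} (hc : c ≠ 0) (hτ : τ ≠ 0) :
    HasDerivAt (frontMismatch a (alphaOfSpeed a γ τ c) γ τ)
      ((a * c ^ 3 * τ ^ 2 + 4 * γ) / (c * (c ^ 2 * τ ^ 2 + 4))) c := by
  have hq : 0 < c ^ 2 * τ ^ 2 + 4 := by positivity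
  have hr : 0 < √(c ^ 2 * τ ^ 2 + 4) := sqrt_pos.mpr hq
  refine (hasDerivAt_frontMismatch a _ γ τ c).congr_deriv ?_
  unfold alphaOfSpeed
  field_simp
  rw [sq_sqrt hq.le]
  ring

theorem neg_rpow_one_third_pow_three {x : ℝ} (hx : 0 ≤ x) : (-x ^ ((1 : ℝ) / 3)) ^ 3 = -x := by
  have h : (x ^ ((3 : ℕ) : ℝ)⁻¹) ^ 3 = x := rpow_inv_natCast_pow hx (by norm_num)
  rw [neg_pow, one_div]
  norm_num at h ⊢
  rw [h]

/-- At the fold point: c_bp = -(12γ/(√2 τ̂²))^{1/3} < 0 and, with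
α_bp = ((√2/3)c_bp - γ)·√(4+c_bp²τ̂²)/(c_bp τ̂), the function
F(c) = (√2/3)c - α_bp·cτ̂/√(c²τ̂²+4) - γ satisfies F(c_bp) = 0 and F'(c_bp) = 0. -/
theorem fold_point (τ γ : ℝ) (hτ : 0 < τ) (hγ : 0 < γ) :
    let cbp : ℝ := -((12 * γ / (Real.sqrt 2 * τ ^ 2)) ^ ((1 : ℝ) / 3))
    let αbp : ℝ := (Real.sqrt 2 / 3 * cbp - γ) * Real.sqrt (4 + cbp ^ 2 * τ ^ 2) / (cbp * τ)
    let F : ℝ → ℝ := fun c =>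
      Real.sqrt 2 / 3 * c - αbp * (c * τ / Real.sqrt (c ^ 2 * τ ^ 2 + 4)) - γ
    cbp < 0 ∧ F cbp = 0 ∧ deriv F cbp = 0 := by
  intro cbp αbp F
  have hA : 0 < 12 * γ / (√2 * τ ^ 2) := by positivity
  have hcbp : cbp < 0 := neg_neg_of_pos (rpow_pos_of_pos hA _)
  have hF : F = frontMismatch (√2 / 3) (alphaOfSpeed (√2 / 3) γ τ cbp) γ τ := by
    simp only [F, αbp, alphaOfSpeed, add_comm (4 : ℝ)]
    rfl
  rw [hF]
  refine ⟨hcbp, frontMismatch_alphaOfSpeed_self hcbp.ne hτ.ne', ?_⟩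
  rw [(hasDerivAt_frontMismatch_alphaOfSpeed_self hcbp.ne hτ.ne').deriv,
    neg_rpow_one_third_pow_three hA.le]
  field_simp
  ring
end

section
/- Fix τ̂ > 0 and γ > 0. For each α ∈ ℝ, let N(α) be the number of real solutions c of (√2/3)c = α·cτ̂/√(c²τ̂²+4) + γ. Then there exists α_bp > 0 such that N(α) = 1 for α < α_bp and N(α) = 3 for α > α_bp. -/
/-!
Write `F_α(c) = (√2/3) c - α v*(c)`. It is odd, and `F_α'(c) = (√2/3)(1 - α / A(c))` with
`A(c) = √2 (c²τ̂² + 4)^{3/2} / (12 τ̂)`, which is even and strictly increasing in `|c|`.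
For `α < A(0)` the map `F_α` is strictly increasing, so `F_α = γ` has one solution.
For `α = A(p)`, `p ≥ 0`, it increases, decreases on `[-p, p]` and increases again, with local
maximum `F_α(-p) = √2 τ̂² p³ / 12 =: M(p)` and local minimum `-M(p) < γ`; hence one solution
when `M(p) < γ` and three when `M(p) > γ`. Since `A` and `M` both increase with `p`, the
threshold is `α_bp = A(p_bp)` where `M(p_bp) = γ`.
-/

open Filter Set

structure IsNShaped {X Y : Type*} [Preorder X] [Preorder Y] (f : X → Y) (a b : X) : Prop where
  strictMonoOn_Iic : StrictMonoOn f (Iic a)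
  strictAntiOn_Icc : StrictAntiOn f (Icc a b)
  strictMonoOn_Ici : StrictMonoOn f (Ici b)

section RootCount

variable {X Y : Type*} [ConditionallyCompleteLinearOrder X] [TopologicalSpace X] [OrderTopology X]
  [DenselyOrdered X] [LinearOrder Y] [TopologicalSpace Y] [OrderClosedTopology Y]
  {f : X → Y} {a b : X} {y : Y}

theorem ncard_setOf_eq_eq_one_of_strictMono (hf : Continuous f) (hmono : StrictMono f)
    (htop : Tendsto f atTop atTop) (hbot : Tendsto f atBot atBot) :
    {x | f x = y}.ncard = 1 := by
  obtain ⟨x, rfl⟩ := hf.surjective htop hbot y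
  simp [hmono.injective.eq_iff]

namespace IsNShaped

theorem ncard_setOf_eq_eq_one (h : IsNShaped f a b) (hf : Continuous f)
    (htop : Tendsto f atTop atTop) (hy : f a < y) : {x | f x = y}.ncard = 1 := by
  have hle : ∀ x ≤ b, f x ≤ f a := by
    intro x hx
    rcases le_total x a with hxa | hax
    · exact h.strictMonoOn_Iic.monotoneOn hxa le_rfl hxa
    · exact h.strictAntiOn_Icc.antitoneOn (left_mem_Icc.2 (hax.trans hx)) ⟨hax, hx⟩ hax
  obtain ⟨c, hbc, rfl⟩ := intermediate_value_Ioi hf.continuousOn htop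
    ((hle b le_rfl).trans_lt hy)
  refine ncard_eq_one.2 ⟨c, Set.ext fun x => ⟨fun hx => ?_, fun hx => hx ▸ rfl⟩⟩
  have hbx : b ≤ x := le_of_not_ge fun hxb => (hle x hxb).not_gt (hx ▸ hy)
  exact h.strictMonoOn_Ici.injOn hbx hbc.le hx

theorem ncard_setOf_eq_eq_three (h : IsNShaped f a b) (hf : Continuous f)
    (htop : Tendsto f atTop atTop) (hbot : Tendsto f atBot atBot) (hab : a ≤ b)
    (hby : f b < y) (hya : y < f a) : {x | f x = y}.ncard = 3 := by
  obtain ⟨c₁, hc₁ : c₁ < a, hfc₁⟩ := intermediate_value_Iio hf.continuousOn hbot hya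
  obtain ⟨c₂, hc₂, hfc₂⟩ := intermediate_value_Ioo' hab hf.continuousOn ⟨hby, hya⟩
  obtain ⟨c₃, hc₃ : b < c₃, hfc₃⟩ := intermediate_value_Ioi hf.continuousOn htop hby
  refine ncard_eq_three.2 ⟨c₁, c₂, c₃, (hc₁.trans hc₂.1).ne, (hc₁.trans_le (hab.trans hc₃.le)).ne,
    (hc₂.2.trans hc₃).ne, Set.ext fun x => ⟨fun hx => ?_, ?_⟩⟩
  · rcases le_total x a with hxa | hax
    · exact .inl (h.strictMonoOn_Iic.injOn hxa hc₁.le (hx.trans hfc₁.symm))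
    rcases le_total x b with hxb | hbx
    · exact .inr (.inl (h.strictAntiOn_Icc.injOn ⟨hax, hxb⟩ (Ioo_subset_Icc_self hc₂)
        (hx.trans hfc₂.symm)))
    · exact .inr (.inr (h.strictMonoOn_Ici.injOn hbx hc₃.le (hx.trans hfc₃.symm)))
  · rintro (rfl | rfl | rfl) <;> assumption

end IsNShaped

end RootCount

namespace TravellingFront

noncomputable def vStarDenom (τ c : ℝ) : ℝ := √(c ^ 2 * τ ^ 2 + 4)

noncomputable def vStar (τ c : ℝ) : ℝ := c * τ / vStarDenom τ c

noncomputable def existenceFn (τ α c : ℝ) : ℝ := √2 / 3 * c - α * vStar τ c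

/-- `existenceFn τ α` has a critical point at `c` iff `α = foldAlpha τ c`. -/
noncomputable def foldAlpha (τ c : ℝ) : ℝ := √2 * vStarDenom τ c ^ 3 / (12 * τ)

noncomputable def foldValue (τ p : ℝ) : ℝ := √2 * τ ^ 2 * p ^ 3 / 12

variable {τ α : ℝ}

lemma vStarDenom_pos (τ c : ℝ) : 0 < vStarDenom τ c := Real.sqrt_pos.2 (by positivity)

lemma vStarDenom_sq (τ c : ℝ) : vStarDenom τ c ^ 2 = c ^ 2 * τ ^ 2 + 4 :=
  Real.sq_sqrt (by positivity)

lemma abs_mul_le_vStarDenom (τ c : ℝ) : |c * τ| ≤ vStarDenom τ c :=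
  Real.abs_le_sqrt (by nlinarith)

lemma abs_vStar_le_one (τ c : ℝ) : |vStar τ c| ≤ 1 := by
  rw [vStar, abs_div, abs_of_pos (vStarDenom_pos τ c)]
  exact div_le_one_of_le₀ (abs_mul_le_vStarDenom τ c) (vStarDenom_pos τ c).le

lemma vStarDenom_neg (τ c : ℝ) : vStarDenom τ (-c) = vStarDenom τ c := by
  rw [vStarDenom, vStarDenom, neg_sq]

lemma vStar_neg (τ c : ℝ) : vStar τ (-c) = -vStar τ c := by
  rw [vStar, vStar, vStarDenom_neg, neg_mul, neg_div]

lemma hasDerivAt_vStarDenom (τ c : ℝ) :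
    HasDerivAt (vStarDenom τ) (c * τ ^ 2 / vStarDenom τ c) c := by
  have h : HasDerivAt (vStarDenom τ) _ c :=
    (((hasDerivAt_pow 2 c).mul_const (τ ^ 2)).add_const 4).sqrt (by positivity)
  refine h.congr_deriv ?_
  rw [vStarDenom]
  ring

lemma hasDerivAt_vStar (τ c : ℝ) : HasDerivAt (vStar τ) (4 * τ / vStarDenom τ c ^ 3) c := by
  have h : HasDerivAt (vStar τ) _ c := ((hasDerivAt_id' c).mul_const τ).div
    (hasDerivAt_vStarDenom τ c) (vStarDenom_pos τ c).ne'
  refine h.congr_deriv ?_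
  have := vStarDenom_pos τ c
  field_simp
  linear_combination τ * vStarDenom_sq τ c

lemma hasDerivAt_existenceFn (c : ℝ) :
    HasDerivAt (existenceFn τ α) (√2 / 3 * (1 - α / foldAlpha τ c)) c := by
  have h : HasDerivAt (existenceFn τ α) _ c :=
    ((hasDerivAt_id' c).const_mul (√2 / 3)).sub ((hasDerivAt_vStar τ c).const_mul α)
  refine h.congr_deriv ?_
  have := vStarDenom_pos τ c
  simp only [foldAlpha]
  field_simp
  ring

lemma continuous_existenceFn : Continuous (existenceFn τ α) :=
  continuous_iff_continuousAt.2 fun c => (hasDerivAt_existenceFn c).continuousAt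

lemma existenceFn_neg (c : ℝ) : existenceFn τ α (-c) = -existenceFn τ α c := by
  simp only [existenceFn, vStar_neg]
  ring

lemma abs_existenceFn_sub_le (c : ℝ) : |existenceFn τ α c - √2 / 3 * c| ≤ |α| := by
  rw [existenceFn, sub_sub_cancel_left, abs_neg, abs_mul]
  exact mul_le_of_le_one_right (abs_nonneg α) (abs_vStar_le_one τ c)

lemma tendsto_existenceFn_atTop : Tendsto (existenceFn τ α) atTop atTop := by
  refine tendsto_atTop_mono (fun c => ?_) (tendsto_atTop_add_const_right _ (-|α|)
    (tendsto_id.const_mul_atTop (by positivity : (0 : ℝ) < √2 / 3)))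
  simp only [id]
  linarith [(abs_le.1 (abs_existenceFn_sub_le (τ := τ) (α := α) c)).1]

lemma tendsto_existenceFn_atBot : Tendsto (existenceFn τ α) atBot atBot := by
  refine tendsto_atBot_mono (fun c => ?_) (tendsto_atBot_add_const_right _ |α|
    (tendsto_id.const_mul_atBot (by positivity : (0 : ℝ) < √2 / 3)))
  simp only [id]
  linarith [(abs_le.1 (abs_existenceFn_sub_le (τ := τ) (α := α) c)).2]

lemma foldAlpha_pos (hτ : 0 < τ) (c : ℝ) : 0 < foldAlpha τ c := by
  have := vStarDenom_pos τ c
  unfold foldAlpha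
  positivity

lemma foldAlpha_lt_foldAlpha_iff (hτ : 0 < τ) {c p : ℝ} :
    foldAlpha τ c < foldAlpha τ p ↔ c ^ 2 < p ^ 2 := by
  have := vStarDenom_pos τ c
  rw [foldAlpha, foldAlpha, div_lt_div_iff_of_pos_right (by positivity),
    mul_lt_mul_iff_right₀ (by positivity), pow_lt_pow_iff_left₀ this.le (vStarDenom_pos τ p).le
    (by norm_num), vStarDenom, vStarDenom, Real.sqrt_lt_sqrt_iff (by positivity),
    add_lt_add_iff_right, mul_lt_mul_iff_left₀ (by positivity)]

lemma existenceFn_strictMonoOn (hτ : 0 < τ) {s : Set ℝ} (hs : Convex ℝ s)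
    (h : ∀ c ∈ interior s, α < foldAlpha τ c) : StrictMonoOn (existenceFn τ α) s := by
  refine strictMonoOn_of_hasDerivWithinAt_pos hs continuous_existenceFn.continuousOn
    (fun c _ => (hasDerivAt_existenceFn c).hasDerivWithinAt) fun c hc => ?_
  have := (div_lt_one (foldAlpha_pos hτ c)).2 (h c hc)
  have : 0 < √2 := by positivity
  nlinarith

lemma existenceFn_strictAntiOn (hτ : 0 < τ) {s : Set ℝ} (hs : Convex ℝ s)
    (h : ∀ c ∈ interior s, foldAlpha τ c < α) : StrictAntiOn (existenceFn τ α) s := by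
  refine strictAntiOn_of_hasDerivWithinAt_neg hs continuous_existenceFn.continuousOn
    (fun c _ => (hasDerivAt_existenceFn c).hasDerivWithinAt) fun c hc => ?_
  have := (one_lt_div (foldAlpha_pos hτ c)).2 (h c hc)
  have : 0 < √2 := by positivity
  nlinarith

lemma strictMono_existenceFn_of_lt_foldAlpha_zero (hτ : 0 < τ) (hα : α < foldAlpha τ 0) :
    StrictMono (existenceFn τ α) := by
  refine strictMonoOn_univ.1 (existenceFn_strictMonoOn hτ convex_univ fun c _ => ?_)
  exact hα.trans_le (not_lt.1 ((foldAlpha_lt_foldAlpha_iff hτ).not.2 (by simp; positivity)))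

variable {p : ℝ}

lemma isNShaped_existenceFn_foldAlpha (hτ : 0 < τ) (hp : 0 ≤ p) :
    IsNShaped (existenceFn τ (foldAlpha τ p)) (-p) p where
  strictMonoOn_Iic := existenceFn_strictMonoOn hτ (convex_Iic _) fun c hc => by
    rw [interior_Iic, mem_Iio] at hc
    exact (foldAlpha_lt_foldAlpha_iff hτ).2 (by nlinarith)
  strictAntiOn_Icc := existenceFn_strictAntiOn hτ (convex_Icc _ _) fun c hc => by
    rw [interior_Icc] at hc
    exact (foldAlpha_lt_foldAlpha_iff hτ).2 (sq_lt_sq' hc.1 hc.2)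
  strictMonoOn_Ici := existenceFn_strictMonoOn hτ (convex_Ici _) fun c hc => by
    rw [interior_Ici, mem_Ioi] at hc
    exact (foldAlpha_lt_foldAlpha_iff hτ).2 (by nlinarith)

lemma existenceFn_foldAlpha_neg (hτ : τ ≠ 0) (p : ℝ) :
    existenceFn τ (foldAlpha τ p) (-p) = foldValue τ p := by
  have := vStarDenom_pos τ p
  simp only [existenceFn, foldAlpha, foldValue, vStar, vStarDenom_neg]
  field_simp
  linear_combination (3 * p) * vStarDenom_sq τ p

lemma ncard_existenceFn_foldAlpha_eq_one (hτ : 0 < τ) {γ : ℝ} (hp : 0 ≤ p)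
    (hγ : foldValue τ p < γ) : {c | existenceFn τ (foldAlpha τ p) c = γ}.ncard = 1 :=
  (isNShaped_existenceFn_foldAlpha hτ hp).ncard_setOf_eq_eq_one continuous_existenceFn
    tendsto_existenceFn_atTop (by rwa [existenceFn_foldAlpha_neg hτ.ne'])

lemma ncard_existenceFn_foldAlpha_eq_three (hτ : 0 < τ) {γ : ℝ} (hp : 0 ≤ p) (hγ : 0 < γ)
    (hγp : γ < foldValue τ p) : {c | existenceFn τ (foldAlpha τ p) c = γ}.ncard = 3 := by
  have hmax := existenceFn_foldAlpha_neg hτ.ne' p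
  have hmin : existenceFn τ (foldAlpha τ p) p = -foldValue τ p := by
    rw [← hmax, ← existenceFn_neg, neg_neg]
  exact (isNShaped_existenceFn_foldAlpha hτ hp).ncard_setOf_eq_eq_three continuous_existenceFn
    tendsto_existenceFn_atTop tendsto_existenceFn_atBot (by linarith) (by linarith)
    (by rwa [hmax])

lemma continuous_foldAlpha : Continuous (foldAlpha τ) := by
  unfold foldAlpha vStarDenom
  fun_prop

lemma strictMonoOn_foldAlpha (hτ : 0 < τ) : StrictMonoOn (foldAlpha τ) (Ici 0) :=
  fun _ ha _ _ hab => (foldAlpha_lt_foldAlpha_iff hτ).2 (pow_lt_pow_left₀ hab ha two_ne_zero)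

lemma continuous_foldValue : Continuous (foldValue τ) := by
  unfold foldValue
  fun_prop

lemma strictMonoOn_foldValue (hτ : 0 < τ) : StrictMonoOn (foldValue τ) (Ici 0) := by
  intro _ ha _ _ hab
  unfold foldValue
  gcongr

lemma tendsto_foldValue_atTop (hτ : 0 < τ) : Tendsto (foldValue τ) atTop atTop :=
  ((tendsto_pow_atTop three_ne_zero).const_mul_atTop (by positivity)).atTop_div_const
    (by norm_num)

lemma foldValue_le_foldAlpha (hτ : 0 < τ) (hp : 0 ≤ p) : foldValue τ p ≤ foldAlpha τ p := by
  have hq : p * τ ≤ vStarDenom τ p :=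
    (le_abs_self _).trans (abs_mul_le_vStarDenom τ p)
  calc foldValue τ p = √2 * (p * τ) ^ 3 / (12 * τ) := by
        unfold foldValue
        field_simp
    _ ≤ foldAlpha τ p := by
        unfold foldAlpha
        gcongr

lemma tendsto_foldAlpha_atTop (hτ : 0 < τ) : Tendsto (foldAlpha τ) atTop atTop :=
  tendsto_atTop_mono' _ ((eventually_ge_atTop 0).mono fun _ hp => foldValue_le_foldAlpha hτ hp)
    (tendsto_foldValue_atTop hτ)

end TravellingFront

open TravellingFront

/-- For fixed τ̂ > 0 and γ > 0, there is α_bp > 0 such that the existence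
condition (√2/3)c = α·cτ̂/√(c²τ̂²+4) + γ has exactly one solution for
α < α_bp and exactly three solutions for α > α_bp. -/
theorem existence_condition_bifurcation (τ γ : ℝ) (hτ : 0 < τ) (hγ : 0 < γ) :
    ∃ αbp : ℝ, 0 < αbp ∧
      (∀ α : ℝ, α < αbp →
        {c : ℝ | Real.sqrt 2 / 3 * c
          = α * (c * τ / Real.sqrt (c ^ 2 * τ ^ 2 + 4)) + γ}.ncard = 1) ∧
      (∀ α : ℝ, αbp < α →
        {c : ℝ | Real.sqrt 2 / 3 * c
          = α * (c * τ / Real.sqrt (c ^ 2 * τ ^ 2 + 4)) + γ}.ncard = 3) := by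
  have hset (α : ℝ) : {c : ℝ | Real.sqrt 2 / 3 * c
      = α * (c * τ / Real.sqrt (c ^ 2 * τ ^ 2 + 4)) + γ} = {c | existenceFn τ α c = γ} :=
    ext fun _ => sub_eq_iff_eq_add'.symm
  obtain ⟨pbp, hpbp, hγpbp⟩ : ∃ pbp ∈ Ici 0, foldValue τ pbp = γ :=
    intermediate_value_Ici continuous_foldValue.continuousOn (tendsto_foldValue_atTop hτ)
      (by simpa [foldValue] using hγ.le)
  have hsurj {α : ℝ} (hα : foldAlpha τ 0 ≤ α) : ∃ p ∈ Ici 0, foldAlpha τ p = α :=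
    intermediate_value_Ici continuous_foldAlpha.continuousOn (tendsto_foldAlpha_atTop hτ) hα
  refine ⟨foldAlpha τ pbp, foldAlpha_pos hτ pbp, fun α hα => ?_, fun α hα => ?_⟩ <;> rw [hset]
  · rcases lt_or_ge α (foldAlpha τ 0) with h0 | h0
    · exact ncard_setOf_eq_eq_one_of_strictMono continuous_existenceFn
        (strictMono_existenceFn_of_lt_foldAlpha_zero hτ h0) tendsto_existenceFn_atTop
        tendsto_existenceFn_atBot
    obtain ⟨p, hp, rfl⟩ := hsurj h0
    have hlt := (strictMonoOn_foldAlpha hτ).lt_iff_lt hp hpbp |>.1 hα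
    exact ncard_existenceFn_foldAlpha_eq_one hτ hp
      (hγpbp ▸ strictMonoOn_foldValue hτ hp hpbp hlt)
  · obtain ⟨p, hp, rfl⟩ := hsurj ((strictMonoOn_foldAlpha hτ).monotoneOn self_mem_Ici hpbp hpbp
      |>.trans hα.le)
    have hlt := (strictMonoOn_foldAlpha hτ).lt_iff_lt hpbp hp |>.1 hα
    exact ncard_existenceFn_foldAlpha_eq_three hτ hp hγ
      (hγpbp ▸ strictMonoOn_foldValue hτ hpbp hp hlt)
end

section
/- Let δ ≥ 0 and f̃ : ℝ → ℝ be continuous and bounded with ‖f̃‖_∞ ≤ 1, and suppose 1 + δ·f̃(x) ≥ κ > 0 for all x. Then the Riccati equation a' = 1 + δf̃(x) - a² has a unique bounded solution a_u with inf_x a_u(x) > 0 and a unique bounded solution a_s with sup_x a_s(x) < 0; moreover ‖a_u - 1‖_∞ = O(δ) and ‖a_s + 1‖_∞ = O(δ) as δ → 0. -/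
open Real Set MeasureTheory Filter Topology BoundedContinuousFunction

/-!
Let `m² ≤ q ≤ M²` with `0 < m` (here `q = 1 + δ f`, `m² = max κ (1 - δ)`, `M² = 1 + δ`). Adding
`2 M a` to both sides of `a' = q - a²` makes a bounded solution a fixed point of
`u ↦ ∫_{-∞}^x e^{-2M(x-s)} (q + 2 M u - u²)(s) ds`; on continuous functions with values in
`[m, M]` this map is a self-map contracting the sup distance by `1 - m / M`, which gives a
positive solution with `m ≤ a ≤ M`. If `a, b` are solutions with `a + b ≥ c > 0`, then
`((a - b)²)' ≤ -2c (a - b)²`, so `(a - b)²` grows exponentially as `x → -∞` unless it vanishes;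
hence bounded positive solutions are unique. Negative solutions are the positive solutions of the
reflected equation under `a(x) ↦ -a(-x)`. Finally `√(1 - δ) ≤ a_u ≤ √(1 + δ)` gives
`|a_u - 1| ≤ δ`.
-/

section ExpConv

variable {c B : ℝ} {g h : ℝ → ℝ}

/-- `expConv c g x = ∫_{-∞}^x e^{-c(x-s)} g(s) ds`, the bounded solution of `v' + c v = g`. -/
noncomputable def expConv (c : ℝ) (g : ℝ → ℝ) (x : ℝ) : ℝ :=
  exp (-(c * x)) * ∫ s in Iic x, exp (c * s) * g s

lemma integrableOn_exp_mul_mul_Iic (hc : 0 < c) (hg : Continuous g) (hgB : ∀ s, |g s| ≤ B)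
    (x : ℝ) : IntegrableOn (fun s => exp (c * s) * g s) (Iic x) := by
  refine ((integrableOn_exp_mul_Iic hc x).mul_const B).mono' (by fun_prop) ?_
  filter_upwards with s
  rw [norm_mul, norm_of_nonneg (exp_pos _).le]
  exact mul_le_mul_of_nonneg_left (hgB s) (exp_pos _).le

lemma hasDerivAt_integral_Iic {F : ℝ → ℝ} (hF : Continuous F)
    (hint : ∀ x, IntegrableOn F (Iic x)) (x : ℝ) :
    HasDerivAt (fun y => ∫ s in Iic y, F s) (F x) x := by
  have hsplit : (fun y => ∫ s in Iic y, F s) =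
      fun y => (∫ s in Iic 0, F s) + ∫ s in (0 : ℝ)..y, F s := by
    funext y
    rw [← intervalIntegral.integral_Iic_sub_Iic (hint 0) (hint y), add_sub_cancel]
  rw [hsplit]
  exact (hF.integral_hasStrictDerivAt 0 x).hasDerivAt.const_add _

lemma hasDerivAt_expConv (hc : 0 < c) (hg : Continuous g) (hgB : ∀ s, |g s| ≤ B) (x : ℝ) :
    HasDerivAt (expConv c g) (g x - c * expConv c g x) x := by
  have hexp : HasDerivAt (fun y => exp (-(c * y))) (-c * exp (-(c * x))) x := by
    simpa [mul_comm] using ((hasDerivAt_id x).const_mul c).neg.exp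
  have hint := hasDerivAt_integral_Iic (by fun_prop) (integrableOn_exp_mul_mul_Iic hc hg hgB) x
  refine (hexp.mul hint).congr_deriv ?_
  rw [expConv, ← mul_assoc (exp _), ← exp_add, neg_add_cancel, exp_zero]
  ring

lemma continuous_expConv (hc : 0 < c) (hg : Continuous g) (hgB : ∀ s, |g s| ≤ B) :
    Continuous (expConv c g) :=
  continuous_iff_continuousAt.2 fun x => (hasDerivAt_expConv hc hg hgB x).continuousAt

lemma expConv_const (hc : 0 < c) (k x : ℝ) : expConv c (fun _ => k) x = k / c := by
  rw [expConv, integral_mul_const, integral_exp_mul_Iic hc, exp_neg]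
  field_simp

lemma expConv_mono (hc : 0 < c) (hg : Continuous g) (hgB : ∀ s, |g s| ≤ B) (hh : Continuous h)
    {B' : ℝ} (hhB : ∀ s, |h s| ≤ B') (hgh : ∀ s, g s ≤ h s) (x : ℝ) :
    expConv c g x ≤ expConv c h x := by
  refine mul_le_mul_of_nonneg_left ?_ (exp_pos _).le
  exact setIntegral_mono (integrableOn_exp_mul_mul_Iic hc hg hgB x)
    (integrableOn_exp_mul_mul_Iic hc hh hhB x) fun s =>
      mul_le_mul_of_nonneg_left (hgh s) (exp_pos _).le

lemma expConv_mem_Icc (hc : 0 < c) (hg : Continuous g) {lo hi : ℝ}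
    (hg_mem : ∀ s, g s ∈ Icc lo hi) (x : ℝ) : expConv c g x ∈ Icc (lo / c) (hi / c) := by
  have hgB : ∀ s, |g s| ≤ max |lo| |hi| := fun s => abs_le_max_abs_abs (hg_mem s).1 (hg_mem s).2
  rw [← expConv_const hc lo x, ← expConv_const hc hi x]
  exact ⟨expConv_mono hc continuous_const (fun _ => le_rfl) hg hgB (fun s => (hg_mem s).1) x,
    expConv_mono hc hg hgB continuous_const (fun _ => le_rfl) (fun s => (hg_mem s).2) x⟩

lemma expConv_sub (hc : 0 < c) (hg : Continuous g) (hgB : ∀ s, |g s| ≤ B) (hh : Continuous h)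
    {B' : ℝ} (hhB : ∀ s, |h s| ≤ B') (x : ℝ) :
    expConv c g x - expConv c h x = expConv c (fun s => g s - h s) x := by
  simp only [expConv, mul_sub]
  rw [integral_sub (integrableOn_exp_mul_mul_Iic hc hg hgB x)
    (integrableOn_exp_mul_mul_Iic hc hh hhB x), mul_sub]

end ExpConv

theorem exists_continuous_fixedPoint_of_contracting {X : Type*} [TopologicalSpace X]
    {Φ : (X → ℝ) → X → ℝ} {m M K : ℝ} (hmM : m ≤ M) (hK0 : 0 ≤ K) (hK : K < 1)
    (hmaps : ∀ u, Continuous u → (∀ x, u x ∈ Icc m M) → Continuous (Φ u) ∧ ∀ x, Φ u x ∈ Icc m M)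
    (hcontr : ∀ u v, Continuous u → Continuous v → (∀ x, u x ∈ Icc m M) → (∀ x, v x ∈ Icc m M) →
      ∀ D, (∀ x, |u x - v x| ≤ D) → ∀ x, |Φ u x - Φ v x| ≤ K * D) :
    ∃ a, Continuous a ∧ (∀ x, a x ∈ Icc m M) ∧ Φ a = a := by
  set S : Set (X →ᵇ ℝ) := {u | ∀ x, u x ∈ Icc m M}
  have hS : IsClosed S := by
    simp only [S, ofPred_forall]
    exact isClosed_iInter fun x => isClosed_Icc.preimage (continuous_eval_const x)
  have : CompleteSpace S := hS.completeSpace_coe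
  have : Nonempty S := ⟨⟨.const X M, fun _ => ⟨hmM, le_rfl⟩⟩⟩
  let T : S → S := fun u =>
    have hu := hmaps u u.1.continuous u.2
    ⟨.ofNormedAddCommGroup (Φ u) hu.1 (max |m| |M|) fun x =>
      abs_le_max_abs_abs (hu.2 x).1 (hu.2 x).2, hu.2⟩
  have hT : ContractingWith ⟨K, hK0⟩ T := by
    refine ⟨hK, LipschitzWith.of_dist_le_mul fun u v => ?_⟩
    exact (dist_le (by positivity)).2 fun x => hcontr u v u.1.continuous v.1.continuous u.2 v.2
      (dist u v) (fun y => dist_coe_le_dist (f := u.1) (g := v.1) y) x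
  obtain ⟨a, ha⟩ : ∃ a, T a = a := ⟨_, hT.fixedPoint_isFixedPt⟩
  exact ⟨a.1, a.1.continuous, a.2, congrArg (fun u : S => ⇑u.1) ha⟩

lemma nonpos_of_hasDerivAt_le_neg_mul {y y' : ℝ → ℝ} {c B : ℝ} (hc : 0 < c)
    (hy : ∀ x, HasDerivAt y (y' x) x) (hy' : ∀ x, y' x ≤ -c * y x) (hB : ∀ x, y x ≤ B) (x : ℝ) :
    y x ≤ 0 := by
  have hz : ∀ t, HasDerivAt (fun t => y t * exp (c * t)) ((y' t + c * y t) * exp (c * t)) t :=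
    fun t => ((hy t).mul ((hasDerivAt_id t).const_mul c).exp).congr_deriv
      (by simp only [id_eq, mul_one]; ring)
  have hanti : Antitone fun t => y t * exp (c * t) :=
    antitone_of_deriv_nonpos (fun t => (hz t).differentiableAt) fun t => by
      rw [(hz t).deriv]
      exact mul_nonpos_of_nonpos_of_nonneg (by linarith [hy' t]) (exp_pos _).le
  have hlim : Tendsto (fun t => B * exp (c * t)) atBot (𝓝 0) := by
    simpa using (tendsto_exp_atBot.comp (tendsto_id.const_mul_atBot hc)).const_mul B
  have hle : y x * exp (c * x) ≤ 0 := ge_of_tendsto hlim <| by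
    filter_upwards [eventually_le_atBot x] with t ht
    exact (hanti ht).trans (mul_le_mul_of_nonneg_right (hB t) (exp_pos _).le)
  exact nonpos_of_mul_nonpos_left hle (exp_pos _)

def IsRiccatiSolution (q a : ℝ → ℝ) : Prop :=
  ∀ x, HasDerivAt a (q x - a x ^ 2) x

lemma IsRiccatiSolution.eq_of_le_add {q a b : ℝ → ℝ} {m B : ℝ} (ha : IsRiccatiSolution q a)
    (hb : IsRiccatiSolution q b) (hm : 0 < m) (hsum : ∀ x, m ≤ a x + b x)
    (hB : ∀ x, |a x - b x| ≤ B) : a = b := by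
  have hy : ∀ x, HasDerivAt (fun x => (a x - b x) ^ 2)
      (-(2 * (a x + b x)) * (a x - b x) ^ 2) x :=
    fun x => (((ha x).sub (hb x)).pow 2).congr_deriv
      (by simp only [Nat.cast_ofNat, Pi.sub_apply]; ring)
  have hy' : ∀ x, -(2 * (a x + b x)) * (a x - b x) ^ 2 ≤ -(2 * m) * (a x - b x) ^ 2 :=
    fun x => by nlinarith [sq_nonneg (a x - b x), hsum x]
  funext x
  have h := nonpos_of_hasDerivAt_le_neg_mul (by linarith) hy hy'
    (fun x => (sq_abs _).symm.trans_le (pow_le_pow_left₀ (abs_nonneg _) (hB x) 2)) x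
  nlinarith [sq_nonneg (a x - b x)]

def riccatiShift (q : ℝ → ℝ) (M : ℝ) (u : ℝ → ℝ) (s : ℝ) : ℝ :=
  q s + 2 * M * u s - u s ^ 2

section RiccatiShift

variable {q u v : ℝ → ℝ} {m M : ℝ}

lemma continuous_riccatiShift (hq : Continuous q) (hu : Continuous u) :
    Continuous (riccatiShift q M u) := by
  unfold riccatiShift
  fun_prop

lemma riccatiShift_mem_Icc (hq_mem : ∀ x, q x ∈ Icc (m ^ 2) (M ^ 2)) (hu_mem : ∀ x, u x ∈ Icc m M)
    (s : ℝ) : riccatiShift q M u s ∈ Icc (2 * M * m) (2 * M ^ 2) := by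
  obtain ⟨hu₁, hu₂⟩ := hu_mem s
  obtain ⟨hq₁, hq₂⟩ := hq_mem s
  constructor <;> unfold riccatiShift <;> nlinarith

lemma abs_riccatiShift_sub_le (hu_mem : ∀ x, u x ∈ Icc m M) (hv_mem : ∀ x, v x ∈ Icc m M)
    (s : ℝ) : |riccatiShift q M u s - riccatiShift q M v s| ≤ 2 * (M - m) * |u s - v s| := by
  obtain ⟨hu₁, hu₂⟩ := hu_mem s
  obtain ⟨hv₁, hv₂⟩ := hv_mem s
  have hsum : |2 * M - u s - v s| ≤ 2 * (M - m) := abs_le.2 ⟨by linarith, by linarith⟩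
  calc |riccatiShift q M u s - riccatiShift q M v s| = |2 * M - u s - v s| * |u s - v s| := by
        rw [← abs_mul, riccatiShift, riccatiShift]; ring_nf
    _ ≤ 2 * (M - m) * |u s - v s| := by gcongr

end RiccatiShift

theorem exists_isRiccatiSolution_mem_Icc {q : ℝ → ℝ} {m M : ℝ} (hq : Continuous q) (hm : 0 < m)
    (hmM : m ≤ M) (hq_mem : ∀ x, q x ∈ Icc (m ^ 2) (M ^ 2)) :
    ∃ a, IsRiccatiSolution q a ∧ ∀ x, a x ∈ Icc m M := by
  have hM₀ : 0 < M := hm.trans_le hmM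
  have hM : 0 < 2 * M := by linarith
  have hG_bdd : ∀ u, (∀ x, u x ∈ Icc m M) →
      ∀ s, |riccatiShift q M u s| ≤ max |2 * M * m| |2 * M ^ 2| := fun u hu s =>
    abs_le_max_abs_abs (riccatiShift_mem_Icc hq_mem hu s).1 (riccatiShift_mem_Icc hq_mem hu s).2
  have hmaps : ∀ u, Continuous u → (∀ x, u x ∈ Icc m M) →
      Continuous (expConv (2 * M) (riccatiShift q M u)) ∧
        ∀ x, expConv (2 * M) (riccatiShift q M u) x ∈ Icc m M := by
    intro u hu hu_mem
    have hG := continuous_riccatiShift (M := M) hq hu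
    refine ⟨continuous_expConv hM hG (hG_bdd u hu_mem), fun x => ?_⟩
    have h := expConv_mem_Icc hM hG (riccatiShift_mem_Icc hq_mem hu_mem) x
    rwa [mul_div_cancel_left₀ _ hM.ne', sq, ← mul_assoc, mul_div_cancel_left₀ _ hM.ne'] at h
  have hcontr : ∀ u v, Continuous u → Continuous v → (∀ x, u x ∈ Icc m M) →
      (∀ x, v x ∈ Icc m M) → ∀ D, (∀ x, |u x - v x| ≤ D) →
      ∀ x, |expConv (2 * M) (riccatiShift q M u) x - expConv (2 * M) (riccatiShift q M v) x|
        ≤ (1 - m / M) * D := by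
    intro u v hu hv hu_mem hv_mem D hD x
    have hGu := continuous_riccatiShift (M := M) hq hu
    have hGv := continuous_riccatiShift (M := M) hq hv
    have hdiff : ∀ s, riccatiShift q M u s - riccatiShift q M v s ∈
        Icc (-(2 * (M - m) * D)) (2 * (M - m) * D) := fun s =>
      abs_le.1 ((abs_riccatiShift_sub_le hu_mem hv_mem s).trans
        (mul_le_mul_of_nonneg_left (hD s) (by linarith)))
    have h := expConv_mem_Icc hM (hGu.sub hGv) hdiff x
    have hK : 2 * (M - m) * D / (2 * M) = (1 - m / M) * D := by field_simp
    rw [neg_div, hK] at h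
    rw [expConv_sub hM hGu (hG_bdd u hu_mem) hGv (hG_bdd v hv_mem)]
    exact abs_le.2 h
  obtain ⟨a, ha_cont, ha_mem, ha_fix⟩ := exists_continuous_fixedPoint_of_contracting hmM
    (sub_nonneg.2 ((div_le_one hM₀).2 hmM)) (sub_lt_self _ (div_pos hm hM₀)) hmaps hcontr
  refine ⟨a, fun x => ?_, ha_mem⟩
  have ha := hasDerivAt_expConv hM (continuous_riccatiShift hq ha_cont) (hG_bdd a ha_mem) x
  rw [ha_fix] at ha
  exact ha.congr_deriv (by rw [riccatiShift]; ring)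

lemma IsRiccatiSolution.comp_neg {q a : ℝ → ℝ} (h : IsRiccatiSolution q a) :
    IsRiccatiSolution (fun x => q (-x)) (fun x => -a (-x)) := fun x =>
  ((h (-x)).scomp x (hasDerivAt_neg x)).neg.congr_deriv (by simp)

theorem existsUnique_pos_isRiccatiSolution {q : ℝ → ℝ} {m M : ℝ} (hq : Continuous q)
    (hm : 0 < m) (hmM : m ≤ M) (hq_mem : ∀ x, q x ∈ Icc (m ^ 2) (M ^ 2)) :
    (∃! a, IsRiccatiSolution q a ∧ (∃ B, ∀ x, |a x| ≤ B) ∧ ∃ m' > 0, ∀ x, m' ≤ a x) ∧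
      ∀ a, IsRiccatiSolution q a → (∃ B, ∀ x, |a x| ≤ B) → (∃ m' > 0, ∀ x, m' ≤ a x) →
        ∀ x, a x ∈ Icc m M := by
  obtain ⟨a, ha, ha_mem⟩ := exists_isRiccatiSolution_mem_Icc hq hm hmM hq_mem
  have ha_bdd : ∀ x, |a x| ≤ M := fun x => abs_le.2 ⟨by linarith [(ha_mem x).1], (ha_mem x).2⟩
  have huniq : ∀ b, IsRiccatiSolution q b → (∃ B, ∀ x, |b x| ≤ B) →
      (∃ m' > 0, ∀ x, m' ≤ b x) → b = a := by
    rintro b hb ⟨B, hB⟩ ⟨m', hm', hb_pos⟩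
    refine hb.eq_of_le_add ha (add_pos hm' hm) (fun x => add_le_add (hb_pos x) (ha_mem x).1)
      (B := B + M) fun x => ?_
    calc |b x - a x| ≤ |b x| + |a x| := abs_sub _ _
      _ ≤ B + M := add_le_add (hB x) (ha_bdd x)
  exact ⟨⟨a, ⟨ha, ⟨M, ha_bdd⟩, m, hm, fun x => (ha_mem x).1⟩,
      fun b hb => huniq b hb.1 hb.2.1 hb.2.2⟩,
    fun b hb hB hb_pos x => huniq b hb hB hb_pos ▸ ha_mem x⟩

theorem existsUnique_neg_isRiccatiSolution {q : ℝ → ℝ} {m M : ℝ} (hq : Continuous q)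
    (hm : 0 < m) (hmM : m ≤ M) (hq_mem : ∀ x, q x ∈ Icc (m ^ 2) (M ^ 2)) :
    (∃! a, IsRiccatiSolution q a ∧ (∃ B, ∀ x, |a x| ≤ B) ∧ ∃ m' > 0, ∀ x, a x ≤ -m') ∧
      ∀ a, IsRiccatiSolution q a → (∃ B, ∀ x, |a x| ≤ B) → (∃ m' > 0, ∀ x, a x ≤ -m') →
        ∀ x, -a x ∈ Icc m M := by
  obtain ⟨⟨a, ⟨ha, ⟨B, hB⟩, m', hm', ha_pos⟩, huniq⟩, hmem⟩ :=
    existsUnique_pos_isRiccatiSolution (q := fun x => q (-x)) (by fun_prop) hm hmM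
      fun x => hq_mem (-x)
  have hreflect : ∀ b, IsRiccatiSolution q b → (∃ B, ∀ x, |b x| ≤ B) →
      (∃ m' > 0, ∀ x, b x ≤ -m') → IsRiccatiSolution (fun x => q (-x)) (fun x => -b (-x)) ∧
        (∃ B, ∀ x, |-b (-x)| ≤ B) ∧ ∃ m' > 0, ∀ x, m' ≤ -b (-x) :=
    fun b hb ⟨B, hB⟩ ⟨m', hm', hb_neg⟩ =>
      ⟨hb.comp_neg, ⟨B, fun x => by simpa using hB (-x)⟩, m', hm',
        fun x => by linarith [hb_neg (-x)]⟩
  refine ⟨⟨fun x => -a (-x), ⟨by simpa only [neg_neg] using ha.comp_neg,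
      ⟨B, fun x => by simpa using hB (-x)⟩, m', hm', fun x => by linarith [ha_pos (-x)]⟩,
      fun b hb => ?_⟩, fun b hb hB hb_neg x => ?_⟩
  · funext x
    simp [← huniq _ (hreflect b hb.1 hb.2.1 hb.2.2)]
  · obtain ⟨hb', hB', hb_pos'⟩ := hreflect b hb hB hb_neg
    simpa using hmem _ hb' hB' hb_pos' (-x)

lemma abs_sub_one_le_of_sqrt_le {δ y : ℝ} (hδ : 0 ≤ δ) (hlo : √(1 - δ) ≤ y)
    (hhi : y ≤ √(1 + δ)) : |y - 1| ≤ δ := by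
  have hupper : √(1 + δ) ≤ 1 + δ := sqrt_le_iff.2 ⟨by linarith, by nlinarith⟩
  have hlower : 1 - δ ≤ y := by
    rcases le_total δ 1 with hδ1 | hδ1
    · exact ((le_sqrt (by linarith) (by linarith)).2 (by nlinarith)).trans hlo
    · linarith [(sqrt_nonneg _).trans hlo]
  exact abs_le.2 ⟨by linarith, by linarith⟩

/-- For δ ≥ 0 and bounded continuous f̃ with ‖f̃‖_∞ ≤ 1 and 1 + δf̃ ≥ κ > 0,
the Riccati equation a' = 1 + δf̃(x) - a² has a unique bounded solution a_u
with inf a_u > 0 and a unique bounded solution a_s with sup a_s < 0; moreover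
‖a_u - 1‖_∞ = O(δ) and ‖a_s + 1‖_∞ = O(δ) as δ → 0 (uniformly given κ). -/
theorem riccati_bounded_solutions (κ : ℝ) (hκ : 0 < κ) :
    ∃ C : ℝ, 0 < C ∧
      ∀ δ : ℝ, 0 ≤ δ →
        ∀ f : ℝ → ℝ, Continuous f → (∀ x, |f x| ≤ 1) →
          (∀ x, κ ≤ 1 + δ * f x) →
          (∃! a : ℝ → ℝ,
            (∀ x, HasDerivAt a (1 + δ * f x - a x ^ 2) x) ∧
            (∃ M : ℝ, ∀ x, |a x| ≤ M) ∧ (∃ m > 0, ∀ x, m ≤ a x)) ∧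
          (∃! a : ℝ → ℝ,
            (∀ x, HasDerivAt a (1 + δ * f x - a x ^ 2) x) ∧
            (∃ M : ℝ, ∀ x, |a x| ≤ M) ∧ (∃ m > 0, ∀ x, a x ≤ -m)) ∧
          (∀ a : ℝ → ℝ,
            (∀ x, HasDerivAt a (1 + δ * f x - a x ^ 2) x) →
            (∃ M : ℝ, ∀ x, |a x| ≤ M) → (∃ m > 0, ∀ x, m ≤ a x) →
            ∀ x, |a x - 1| ≤ C * δ) ∧
          (∀ a : ℝ → ℝ,
            (∀ x, HasDerivAt a (1 + δ * f x - a x ^ 2) x) →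
            (∃ M : ℝ, ∀ x, |a x| ≤ M) → (∃ m > 0, ∀ x, a x ≤ -m) →
            ∀ x, |a x + 1| ≤ C * δ) := by
  refine ⟨1, one_pos, fun δ hδ f hf hf_le hκf => ?_⟩
  set m := √(max κ (1 - δ))
  set M := √(1 + δ)
  have hq_mem : ∀ x, 1 + δ * f x ∈ Icc (m ^ 2) (M ^ 2) := fun x => by
    obtain ⟨hf₁, hf₂⟩ := abs_le.1 (hf_le x)
    rw [sq_sqrt (by positivity), sq_sqrt (by positivity)]
    exact ⟨max_le (hκf x) (by nlinarith), by nlinarith⟩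
  have hm : 0 < m := sqrt_pos.2 (lt_max_of_lt_left hκ)
  have hmM : m ≤ M :=
    (pow_le_pow_iff_left₀ hm.le (sqrt_nonneg _) two_ne_zero).1 ((hq_mem 0).1.trans (hq_mem 0).2)
  have hclose : ∀ y ∈ Icc m M, |y - 1| ≤ 1 * δ := fun y hy => by
    simpa using abs_sub_one_le_of_sqrt_le hδ ((sqrt_le_sqrt (le_max_right _ _)).trans hy.1) hy.2
  have hq : Continuous fun x => 1 + δ * f x := by fun_prop
  obtain ⟨hpos_unique, hpos_mem⟩ := existsUnique_pos_isRiccatiSolution hq hm hmM hq_mem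
  obtain ⟨hneg_unique, hneg_mem⟩ := existsUnique_neg_isRiccatiSolution hq hm hmM hq_mem
  refine ⟨hpos_unique, hneg_unique, fun a ha hB ha_pos x => hclose _ (hpos_mem a ha hB ha_pos x),
    fun a ha hB ha_neg x => ?_⟩
  rw [← abs_neg, neg_add']
  exact hclose _ (hneg_mem a ha hB ha_neg x)
end
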